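/- arXiv:1310.0538 — 10 statements merged into one kernel-verified Lean document; each statement's English description precedes it below -/
import Mathlib

section
/- Let f : ℕ → ℝ be a nonnegative function with the property that for all r, s ∈ ℕ, if f(r) > 0 then f(r+s) ≥ f(s). Fix a real number k > 0 and define g : ℕ → [0,∞] by g(r) = limsup_{m→∞} f(m·r)/m^k (the limsup taken in the extended nonnegative reals). Then g(c·r) = c^k · g(r) for all positive integers c and r. -/
/-!
Write `u_r(m) = f (m r) / m^k`, so that `g r = limsup u_r`. Since `u_{cr}(m) = c^k u_r(c m)`,
`g (c r)` is `c^k` times a limsup of `u_r` along a subsequence, which gives `≤`.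

For `≥`, `f (a + s) ≥ f s` whenever `f a > 0`. By pigeonhole, `g r` is already the limsup of
`u_r` along a residue class `ρ` mod `c`. Pick `ℓ₁ ≡ ρ` with `f (ℓ₁ r) > 0`; for every `ℓ ≡ ρ` the
number `N = ℓ + (c - 1) ℓ₁` is a multiple `c m` of `c` with `f (N r) ≥ f (ℓ r)`, so
`u_{cr}(m) ≥ (ℓ / m)^k u_r(ℓ)`, and `ℓ / m → c`.
-/

open Filter Topology
open scoped ENNReal

theorem Filter.limsup_finset_sup_filter {α β ι : Type*} [CompleteDistribLattice α] (u : β → α)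
    (s : Finset ι) (F : ι → Filter β) :
    limsup u (s.sup F) = s.sup fun i => limsup u (F i) :=
  Finset.apply_sup_eq_sup_comp (fun G => limsup u G) (fun _ _ => limsup_sup_filter) (limsup_bot u)

theorem Nat.atTop_eq_finset_sup_inf_modEq {c : ℕ} (hc : c ≠ 0) :
    (atTop : Filter ℕ) = (Finset.range c).sup fun ρ => atTop ⊓ 𝓟 {n | n ≡ ρ [MOD c]} := by
  have hcover : (Finset.range c).sup (fun ρ => {n | n ≡ ρ [MOD c]}) = Set.univ := by
    refine Set.eq_univ_of_forall fun n => ?_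
    rw [Finset.sup_set_eq_biUnion, Set.mem_iUnion₂]
    exact ⟨n % c, Finset.mem_range.2 (Nat.mod_lt n (Nat.pos_of_ne_zero hc)),
      (Nat.mod_modEq n c).symm⟩
  have hsup : ((Finset.range c).sup fun ρ => 𝓟 {n | n ≡ ρ [MOD c]}) =
      𝓟 ((Finset.range c).sup fun ρ => {n | n ≡ ρ [MOD c]}) :=
    (Finset.apply_sup_eq_sup_comp 𝓟 (fun _ _ => sup_principal.symm) principal_empty).symm
  rw [← Finset.sup_inf_distrib_left, hsup, hcover, principal_univ, inf_top_eq]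

theorem Nat.exists_limsup_inf_modEq_eq {α : Type*} [CompleteLinearOrder α] (u : ℕ → α) {c : ℕ}
    (hc : c ≠ 0) : ∃ ρ, limsup u (atTop ⊓ 𝓟 {n | n ≡ ρ [MOD c]}) = limsup u atTop := by
  obtain ⟨ρ, -, hρ⟩ := Finset.exists_mem_eq_sup (Finset.range c) (Finset.nonempty_range_iff.2 hc)
    fun ρ => limsup u (atTop ⊓ 𝓟 {n | n ≡ ρ [MOD c]})
  refine ⟨ρ, ?_⟩
  rw [← hρ, ← limsup_finset_sup_filter, ← Nat.atTop_eq_finset_sup_inf_modEq hc]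

theorem Nat.ModEq.dvd_add_sub_one_mul {c ℓ ℓ₁ : ℕ} (hc : c ≠ 0) (h : ℓ ≡ ℓ₁ [MOD c]) :
    c ∣ ℓ + (c - 1) * ℓ₁ := by
  have hcℓ₁ : ℓ₁ + (c - 1) * ℓ₁ = c * ℓ₁ := by
    rw [add_comm, ← add_one_mul, Nat.sub_one_add_one hc]
  exact Nat.modEq_zero_iff_dvd.1 <|
    (h.add_right _).trans (hcℓ₁ ▸ Nat.modEq_zero_iff_dvd.2 (dvd_mul_right c ℓ₁))

theorem ENNReal.tendsto_ofReal_mul_natCast_div_add_rpow {c : ℝ} (hc : 0 < c) (X k : ℝ) :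
    Tendsto (fun ℓ : ℕ => ENNReal.ofReal ((c * (ℓ / (ℓ + X))) ^ k)) atTop
      (𝓝 (ENNReal.ofReal c ^ k)) := by
  have h := ENNReal.tendsto_ofReal (((tendsto_natCast_div_add_atTop X).const_mul c).rpow_const
    (Or.inl (by simpa using hc.ne')) (p := k))
  rwa [mul_one, ← ENNReal.ofReal_rpow_of_pos hc] at h

noncomputable def growthSeq (f : ℕ → ℝ) (k : ℝ) (r m : ℕ) : ℝ≥0∞ :=
  ENNReal.ofReal (f (m * r) / (m : ℝ) ^ k)

section
variable {f : ℕ → ℝ} {k : ℝ}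

theorem le_apply_mul_add_of_pos (h_super : ∀ r s, 0 < f r → f s ≤ f (r + s)) {a : ℕ}
    (ha : 0 < f a) (s t : ℕ) : f s ≤ f (t * a + s) := by
  induction t with
  | zero => simp
  | succ t ih =>
    calc f s ≤ f (t * a + s) := ih
      _ ≤ f (a + (t * a + s)) := h_super a _ ha
      _ = f ((t + 1) * a + s) := by ring_nf

theorem pos_of_growthSeq_pos {r m : ℕ} (h : 0 < growthSeq f k r m) : 0 < f (m * r) := by
  by_contra! hf
  have : f (m * r) / (m : ℝ) ^ k ≤ 0 := div_nonpos_of_nonpos_of_nonneg hf (by positivity)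
  simp [growthSeq, ENNReal.ofReal_eq_zero.2 this] at h

theorem growthSeq_mul {c : ℕ} (hc : c ≠ 0) (r m : ℕ) :
    growthSeq f k (c * r) m = (c : ℝ≥0∞) ^ k * growthSeq f k r (c * m) := by
  have hck : (0 : ℝ) < (c : ℝ) ^ k := by positivity
  rw [growthSeq, growthSeq, ← ENNReal.ofReal_natCast, ENNReal.ofReal_rpow_of_pos (by positivity),
    ← ENNReal.ofReal_mul hck.le, Nat.cast_mul, Real.mul_rpow (by positivity) (by positivity),
    ← mul_div_assoc, mul_div_mul_left _ _ hck.ne', mul_comm c m, mul_assoc]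

theorem growthSeq_mul_ofReal_le {r s ℓ m : ℕ} (hℓ : ℓ ≠ 0) (h : f (ℓ * r) ≤ f (m * s)) :
    growthSeq f k r ℓ * ENNReal.ofReal (((ℓ : ℝ) / m) ^ k) ≤ growthSeq f k s m := by
  have hℓk : (ℓ : ℝ) ^ k ≠ 0 := by positivity
  rw [growthSeq, growthSeq, ← ENNReal.ofReal_mul' (by positivity)]
  refine ENNReal.ofReal_le_ofReal ?_
  rw [Real.div_rpow (by positivity) (by positivity), div_mul_div_comm, mul_comm (f _),
    mul_div_mul_left _ _ hℓk]
  exact div_le_div_of_nonneg_right h (by positivity)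

theorem limsup_growthSeq_mul_le {c : ℕ} (hc : c ≠ 0) (r : ℕ) :
    limsup (growthSeq f k (c * r)) atTop ≤ (c : ℝ≥0∞) ^ k * limsup (growthSeq f k r) atTop := by
  have hck : (c : ℝ≥0∞) ^ k ≠ ⊤ := ENNReal.rpow_ne_top_of_ne_zero (by simpa) (by simp)
  calc limsup (growthSeq f k (c * r)) atTop
      = limsup (fun m => (c : ℝ≥0∞) ^ k * growthSeq f k r (c * m)) atTop :=
        congrArg (limsup · atTop) (funext (growthSeq_mul hc r))
    _ = (c : ℝ≥0∞) ^ k * limsup (growthSeq f k r ∘ (c * ·)) atTop :=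
        ENNReal.limsup_const_mul_of_ne_top hck
    _ ≤ (c : ℝ≥0∞) ^ k * limsup (growthSeq f k r) atTop := by
        gcongr
        exact (tendsto_id.const_mul_atTop' (Nat.pos_of_ne_zero hc)).limsup_comp_le_limsup

theorem growthSeq_mul_ofReal_le_of_modEq (h_super : ∀ r s, 0 < f r → f s ≤ f (r + s))
    {c r ℓ ℓ₁ : ℕ} (hc : c ≠ 0) (hℓ₁ : 0 < f (ℓ₁ * r)) (hℓ : ℓ ≠ 0) (hmod : ℓ ≡ ℓ₁ [MOD c]) :
    growthSeq f k r ℓ * ENNReal.ofReal (((ℓ : ℝ) / ((ℓ + (c - 1) * ℓ₁) / c : ℕ)) ^ k) ≤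
      growthSeq f k (c * r) ((ℓ + (c - 1) * ℓ₁) / c) := by
  refine growthSeq_mul_ofReal_le hℓ ?_
  calc f (ℓ * r)
      ≤ f ((c - 1) * (ℓ₁ * r) + ℓ * r) := le_apply_mul_add_of_pos h_super hℓ₁ _ _
    _ = f ((ℓ + (c - 1) * ℓ₁) / c * (c * r)) := by
      rw [← mul_assoc _ c r, Nat.div_mul_cancel (hmod.dvd_add_sub_one_mul hc)]
      ring_nf

theorem rpow_mul_limsup_inf_modEq_le (h_super : ∀ r s, 0 < f r → f s ≤ f (r + s)) {c : ℕ}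
    (hc : c ≠ 0) (r ρ : ℕ) :
    (c : ℝ≥0∞) ^ k * limsup (growthSeq f k r) (atTop ⊓ 𝓟 {n | n ≡ ρ [MOD c]}) ≤
      limsup (growthSeq f k (c * r)) atTop := by
  set F := atTop ⊓ 𝓟 {n | n ≡ ρ [MOD c]}
  rcases eq_or_ne (limsup (growthSeq f k r) F) 0 with h0 | h0
  · simp [h0]
  obtain ⟨ℓ₁, hℓ₁ρ, hℓ₁⟩ := (frequently_inf_principal.1
    (frequently_lt_of_lt_limsup (by isBoundedDefault) (pos_iff_ne_zero.2 h0))).exists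
  set m : ℕ → ℕ := fun ℓ => (ℓ + (c - 1) * ℓ₁) / c
  have hm : ∀ ℓ, ℓ ≡ ρ [MOD c] → c * m ℓ = ℓ + (c - 1) * ℓ₁ := fun ℓ hℓ =>
    Nat.mul_div_cancel' ((hℓ.trans hℓ₁ρ.symm).dvd_add_sub_one_mul hc)
  have hstep : ∀ᶠ ℓ in F,
      growthSeq f k r ℓ * ENNReal.ofReal (((ℓ : ℝ) / m ℓ) ^ k) ≤ growthSeq f k (c * r) (m ℓ) := by
    filter_upwards [(eventually_ne_atTop 0).filter_mono inf_le_left,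
      mem_inf_of_right (mem_principal_self _)] with ℓ hℓ hℓρ
    exact growthSeq_mul_ofReal_le_of_modEq h_super hc (pos_of_growthSeq_pos hℓ₁) hℓ
      (hℓρ.trans hℓ₁ρ.symm)
  have hratio : Tendsto (fun ℓ : ℕ => ENNReal.ofReal (((ℓ : ℝ) / m ℓ) ^ k)) F
      (𝓝 ((c : ℝ≥0∞) ^ k)) := by
    have hlim := ENNReal.tendsto_ofReal_mul_natCast_div_add_rpow
      (Nat.cast_pos.2 (Nat.pos_of_ne_zero hc)) ((c - 1) * ℓ₁ : ℕ) k
    rw [ENNReal.ofReal_natCast] at hlim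
    refine (hlim.mono_left inf_le_left).congr' ?_
    filter_upwards [mem_inf_of_right (mem_principal_self _)] with ℓ hℓρ
    have hmℓ : (m ℓ : ℝ) = (ℓ + ((c - 1) * ℓ₁ : ℕ)) / c := by
      rw [eq_div_iff (by simpa using hc), mul_comm, ← Nat.cast_mul, hm ℓ hℓρ, Nat.cast_add]
    rw [hmℓ, div_div_eq_mul_div, mul_div_right_comm, mul_comm]
  have hm_tendsto : Tendsto m F atTop :=
    ((Nat.tendsto_div_const_atTop hc).comp (tendsto_add_atTop_nat _)).mono_left inf_le_left
  have : F.NeBot := frequently_iff_neBot.1 (Nat.frequently_modEq hc ρ)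
  calc (c : ℝ≥0∞) ^ k * limsup (growthSeq f k r) F
      = limsup (growthSeq f k r) F *
          liminf (fun ℓ : ℕ => ENNReal.ofReal (((ℓ : ℝ) / m ℓ) ^ k)) F := by
        rw [hratio.liminf_eq, mul_comm]
    _ ≤ limsup (fun ℓ : ℕ => growthSeq f k r ℓ * ENNReal.ofReal (((ℓ : ℝ) / m ℓ) ^ k)) F :=
        ENNReal.le_limsup_mul
    _ ≤ limsup (growthSeq f k (c * r) ∘ m) F := limsup_le_limsup hstep
    _ ≤ limsup (growthSeq f k (c * r)) atTop := hm_tendsto.limsup_comp_le_limsup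

end

theorem limsup_homogeneous_of_superadditive_general
    (f : ℕ → ℝ)
    (h_super : ∀ r s : ℕ, 0 < f r → f s ≤ f (r + s))
    (k : ℝ)
    (g : ℕ → ENNReal)
    (hg : ∀ r : ℕ, g r =
      Filter.limsup (fun m : ℕ => ENNReal.ofReal (f (m * r) / (m : ℝ) ^ k)) Filter.atTop)
    (c r : ℕ) (hc : 0 < c) :
    g (c * r) = (c : ENNReal) ^ k * g r := by
  have hg' : ∀ r, g r = limsup (growthSeq f k r) atTop := hg
  obtain ⟨ρ, hρ⟩ := Nat.exists_limsup_inf_modEq_eq (growthSeq f k r) hc.ne'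
  rw [hg', hg']
  refine le_antisymm (limsup_growthSeq_mul_le hc.ne' r) ?_
  rw [← hρ]
  exact rpow_mul_limsup_inf_modEq_le h_super hc.ne' r ρ

/-- **Proposition 4.5** (abstract content of Lazarsfeld, Lemma 2.2.38).
Let `f : ℕ → ℝ` be a nonnegative function such that `f (r + s) ≥ f s` whenever `f r > 0`.
Fix a real `k > 0` and define `g r = limsup_{m → ∞} f (m * r) / m ^ k` in `ℝ≥0∞`.
Then `g (c * r) = c ^ k * g r` for all positive integers `c` and `r`. -/
theorem limsup_homogeneous_of_superadditive
    (f : ℕ → ℝ) (h_nonneg : ∀ n, 0 ≤ f n)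
    (h_super : ∀ r s : ℕ, 0 < f r → f s ≤ f (r + s))
    (k : ℝ) (hk : 0 < k)
    (g : ℕ → ENNReal)
    (hg : ∀ r : ℕ, g r =
      Filter.limsup (fun m : ℕ => ENNReal.ofReal (f (m * r) / (m : ℝ) ^ k)) Filter.atTop)
    (c r : ℕ) (hc : 0 < c) (hr : 0 < r) :
    g (c * r) = (c : ENNReal) ^ k * g r :=
  limsup_homogeneous_of_superadditive_general f h_super k g hg c r hc
end

section
/- Let f : C → D be a surjective continuous open map between compact metric spaces and let g : C → ℝ be a continuous function. Then the set S := { c ∈ C : g(c) = sup { g(c') : c' ∈ C, f(c') = f(c) } } is closed in C. -/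
open Topology Filter


/-- **Lemma 5.8 (2)**.  Let `f : C → D` be a surjective continuous open map between
compact metric spaces and `g : C → ℝ` a continuous function.  Then the set of points
`c` at which `g` attains the maximum of `g` over the fiber of `f` through `c` is
closed in `C`. -/
theorem isClosed_fiberwise_maximizers
    {C D : Type*} [MetricSpace C] [CompactSpace C] [MetricSpace D] [CompactSpace D]
    (f : C → D) (hf_cont : Continuous f) (hf_open : IsOpenMap f)
    (hf_surj : Function.Surjective f)
    (g : C → ℝ) (hg : Continuous g) :
    IsClosed {c : C | g c = sSup (g '' (f ⁻¹' {f c}))} := by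
  have hbdd : ∀ d : D, BddAbove (g '' (f ⁻¹' {d})) := fun d =>
    (((isClosed_singleton.preimage hf_cont).isCompact).image hg).bddAbove
  have hle : ∀ c : C, g c ≤ sSup (g '' (f ⁻¹' {f c})) := fun c =>
    le_csSup (hbdd (f c)) ⟨c, rfl, rfl⟩
  apply IsSeqClosed.isClosed
  intro u c hu hlim
  have hgc : Filter.Tendsto (fun n => g (u n)) Filter.atTop (𝓝 (g c)) :=
    (hg.continuousAt.tendsto).comp hlim
  refine le_antisymm (hle c) ?_
  refine csSup_le ⟨g c, c, rfl, rfl⟩ ?_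
  rintro b ⟨c', hc', rfl⟩
  have hfc' : f c' = f c := hc'
  refine le_of_forall_pos_le_add fun ε hε => ?_
  set U := g ⁻¹' Set.Ioi (g c' - ε) with hU
  have hU_open : IsOpen U := isOpen_Ioi.preimage hg
  have hc'U : c' ∈ U := by simp only [hU, Set.mem_preimage, Set.mem_Ioi]; linarith
  have hV : f '' U ∈ 𝓝 (f c) := (hf_open U hU_open).mem_nhds ⟨c', hc'U, hfc'⟩
  have hev : ∀ᶠ n in Filter.atTop, f (u n) ∈ f '' U :=
    ((hf_cont.continuousAt.tendsto).comp hlim).eventually_mem hV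
  have hev2 : ∀ᶠ n in Filter.atTop, g c' - ε ≤ g (u n) := by
    filter_upwards [hev] with n hn
    obtain ⟨y, hyU, hyf⟩ := hn
    have hy2 : g y ≤ sSup (g '' (f ⁻¹' {f (u n)})) :=
      le_csSup (hbdd _) ⟨y, hyf, rfl⟩
    have := hu n
    simp only [Set.mem_setOf_eq] at this
    have hyU' : g c' - ε < g y := hyU
    linarith [this ▸ hy2]
  have hfin : g c' - ε ≤ g c := ge_of_tendsto hgc hev2
  linarith
end

section
/- Let f : C → D be a surjective continuous open map between compact metric spaces and let g : C → ℝ be a continuous function. Let S := { c ∈ C : g(c) = sup { g(c') : c' ∈ C, f(c') = f(c) } } and for d ∈ D set S_d := S ∩ f⁻¹({d}) (which is nonempty). Then for every d ∈ D and every open set U ⊆ C containing S_d, there is an open neighborhood V of d in D such that S_{d'} ∩ U is nonempty for every d' ∈ V. -/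
/-- **Lemma 5.8 (3)**.  Let `f : C → D` be a surjective continuous open map between
compact metric spaces and `g : C → ℝ` a continuous function.  Let
`S = { c : g c = max of g on the fiber through c }` and `S_d = S ∩ f⁻¹ {d}`.
Then for every `d ∈ D` and every open `U ⊇ S_d` there is an open neighborhood `V`
of `d` such that `S_{d'} ∩ U` is nonempty for every `d' ∈ V`. -/
theorem fiberwise_maximizers_lower_semicontinuous
    {C D : Type*} [MetricSpace C] [CompactSpace C] [MetricSpace D] [CompactSpace D]
    (f : C → D) (hf_cont : Continuous f) (hf_open : IsOpenMap f)
    (hf_surj : Function.Surjective f)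
    (g : C → ℝ) (hg : Continuous g)
    (S : Set C) (hS : S = {c : C | g c = sSup (g '' (f ⁻¹' {f c}))})
    (d : D) (U : Set C) (hU : IsOpen U) (hSU : S ∩ f ⁻¹' {d} ⊆ U) :
    ∃ V : Set D, IsOpen V ∧ d ∈ V ∧ ∀ d' ∈ V, (S ∩ f ⁻¹' {d'} ∩ U).Nonempty := by
  -- fibers are compact and nonempty
  have hfib : ∀ d' : D, IsCompact (f ⁻¹' {d'}) :=
    fun d' => (isClosed_singleton.preimage hf_cont).isCompact
  -- every fiber contains a maximizer, which lies in S
  have hmax : ∀ d' : D, ∃ c, f c = d' ∧ c ∈ S ∧ ∀ x ∈ f ⁻¹' {d'}, g x ≤ g c := by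
    intro d'
    obtain ⟨c, hc, hcm⟩ := (hfib d').exists_isMaxOn (hf_surj d') hg.continuousOn
    have hcd : f c = d' := hc
    have hgr : IsGreatest (g '' (f ⁻¹' {f c})) (g c) := by
      rw [hcd]
      exact ⟨⟨c, hc, rfl⟩, fun y ⟨x, hx, hxy⟩ => hxy ▸ hcm hx⟩
    refine ⟨c, hcd, ?_, hcm⟩
    rw [hS]
    exact hgr.csSup_eq.symm
  obtain ⟨c₀, hc₀f, hc₀S, hc₀m⟩ := hmax d
  have hc₀U : c₀ ∈ U := hSU ⟨hc₀S, hc₀f⟩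
  set m := g c₀ with hm
  -- find ε > 0 with g < m - ε on the part of the fiber outside U
  obtain ⟨ε, hε, hK⟩ : ∃ ε > 0, ∀ x ∈ f ⁻¹' {d}, x ∉ U → g x < m - ε := by
    by_cases hne : (f ⁻¹' {d} ∩ Uᶜ).Nonempty
    · obtain ⟨k, hk, hkm⟩ :=
        ((hfib d).inter_right hU.isClosed_compl).exists_isMaxOn hne hg.continuousOn
      have hklt : g k < m := by
        rcases lt_or_eq_of_le (hc₀m k hk.1) with h | h
        · exact h
        · exfalso
          apply hk.2
          apply hSU
          refine ⟨?_, hk.1⟩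
          have h1 : g c₀ = sSup (g '' (f ⁻¹' {f c₀})) := by rw [hS] at hc₀S; exact hc₀S
          rw [hS]
          have hk1 : f k = d := hk.1
          show g k = sSup (g '' (f ⁻¹' {f k}))
          rw [hk1, ← hc₀f, ← h1, h]
      refine ⟨(m - g k) / 2, by linarith, fun x hx hxu => ?_⟩
      have := hkm (⟨hx, hxu⟩ : x ∈ f ⁻¹' {d} ∩ Uᶜ)
      have h2 : g x ≤ g k := this
      linarith
    · exact ⟨1, one_pos, fun x hx hxu => absurd ⟨hx, hxu⟩ (fun h => hne ⟨x, h⟩)⟩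
  -- W is an open set containing the fiber over d
  set W := U ∪ {x | g x < m - ε} with hW
  have hWopen : IsOpen W := hU.union (isOpen_lt hg continuous_const)
  have hFW : f ⁻¹' {d} ⊆ W := by
    intro x hx
    by_cases hxu : x ∈ U
    · exact Or.inl hxu
    · exact Or.inr (hK x hx hxu)
  -- f is a closed map
  have hclosed : IsClosedMap f := hf_cont.isClosedMap
  set V₁ := (f '' Wᶜ)ᶜ with hV₁
  have hV₁open : IsOpen V₁ := isOpen_compl_iff.mpr (hclosed _ hWopen.isClosed_compl)
  have hdV₁ : d ∈ V₁ := by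
    intro hd
    obtain ⟨x, hxW, hxd⟩ := hd
    exact hxW (hFW (by simp [hxd]))
  have hV₁W : ∀ x : C, f x ∈ V₁ → x ∈ W := by
    intro x hx
    by_contra hxW
    exact hx ⟨x, hxW, rfl⟩
  -- open neighborhood from openness of f
  set O := U ∩ {x | m - ε < g x} with hO
  have hOopen : IsOpen O := hU.inter (isOpen_lt continuous_const hg)
  have hc₀O : c₀ ∈ O := ⟨hc₀U, by simp only [Set.mem_setOf_eq]; linarith⟩
  set V₂ := f '' O with hV₂
  have hV₂open : IsOpen V₂ := hf_open O hOopen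
  have hdV₂ : d ∈ V₂ := ⟨c₀, hc₀O, hc₀f⟩
  refine ⟨V₁ ∩ V₂, hV₁open.inter hV₂open, ⟨hdV₁, hdV₂⟩, ?_⟩
  rintro d' ⟨hd'1, hd'2⟩
  obtain ⟨c', hc'f, hc'S, hc'm⟩ := hmax d'
  obtain ⟨x, hxO, hxd'⟩ := hd'2
  have hgx : m - ε < g x := hxO.2
  have hgc' : m - ε < g c' := lt_of_lt_of_le hgx (hc'm x hxd')
  have hc'W : c' ∈ W := hV₁W c' (hc'f ▸ hd'1)
  have hc'U : c' ∈ U := by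
    rcases hc'W with h | h
    · exact h
    · exact absurd h (by simp only [Set.mem_setOf_eq]; linarith)
  exact ⟨c', ⟨⟨hc'S, hc'f⟩, hc'U⟩⟩
end

section
/- Let V be a finite-dimensional real normed vector space and E ⊆ V a closed convex cone with nonempty interior. Suppose mob : V → ℝ is nonnegative, monotone (mob(α + e) ≥ mob(α) for all α ∈ V and e ∈ E), homogeneous of degree p for some real p > 0 (mob(c • α) = c^p · mob(α) for all reals c > 0 and all α ∈ V), and strictly positive on the interior of E. Then for every α ∈ E and every β in the interior of E, mob(α + β) > mob(α). -/
/-- **Lemma 4.5 (second assertion)**, abstract form.  Let `V` be a finite-dimensional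
real normed vector space and `E ⊆ V` a closed convex cone with nonempty interior.
Suppose `mob : V → ℝ` is nonnegative, monotone, homogeneous of degree `p > 0`, and
strictly positive on the interior of `E`.  Then for every `α ∈ E` and every `β` in
the interior of `E` we have `mob (α + β) > mob α`. -/
theorem mob_strict_mono_of_big
    {V : Type*} [NormedAddCommGroup V] [NormedSpace ℝ V] [FiniteDimensional ℝ V]
    (E : Set V) (hE_closed : IsClosed E) (hE_convex : Convex ℝ E)
    (hE_cone : ∀ c : ℝ, 0 ≤ c → ∀ x ∈ E, c • x ∈ E)
    (hE_int : (interior E).Nonempty)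
    (mob : V → ℝ)
    (h_nonneg : ∀ x : V, 0 ≤ mob x)
    (h_mono : ∀ α : V, ∀ e ∈ E, mob α ≤ mob (α + e))
    (p : ℝ) (hp : 0 < p)
    (h_hom : ∀ c : ℝ, 0 < c → ∀ α : V, mob (c • α) = c ^ p * mob α)
    (h_pos : ∀ x ∈ interior E, 0 < mob x)
    (α : V) (hα : α ∈ E) (β : V) (hβ : β ∈ interior E) :
    mob α < mob (α + β) := by
  -- E is closed under addition
  have hadd : ∀ x ∈ E, ∀ y ∈ E, x + y ∈ E := by
    intro x hx y hy
    have h := hE_convex hx hy (by norm_num : (0:ℝ) ≤ 1/2) (by norm_num : (0:ℝ) ≤ 1/2)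
      (by norm_num)
    have h2 := hE_cone 2 (by norm_num) _ h
    have : (2:ℝ) • ((1/2 : ℝ) • x + (1/2 : ℝ) • y) = x + y := by
      rw [smul_add, smul_smul, smul_smul]; norm_num
    rwa [this] at h2
  -- α + β ∈ interior E
  have hintmem : α + β ∈ interior E := by
    have hopen : IsOpen ((fun y => α + y) '' interior E) :=
      (isOpenMap_add_left α) _ isOpen_interior
    have hsub : ((fun y => α + y) '' interior E) ⊆ E := by
      rintro _ ⟨y, hy, rfl⟩
      exact hadd α hα y (interior_subset hy)
    exact interior_maximal hsub hopen ⟨β, hβ, rfl⟩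
  have hposab : 0 < mob (α + β) := h_pos _ hintmem
  rcases eq_or_lt_of_le (h_nonneg α) with h0 | h0
  · rwa [← h0]
  -- mob α > 0 case: find t > 0 with β - t • α ∈ E
  have hα0 : α ≠ 0 := by
    rintro rfl
    have h2 := h_hom 2 (by norm_num) 0
    simp only [smul_zero] at h2
    have h2p : (1:ℝ) < 2 ^ p :=
      (Real.one_lt_rpow_iff_of_pos (by norm_num)).mpr (Or.inl ⟨by norm_num, hp⟩)
    nlinarith
  obtain ⟨r, hr, hball⟩ := Metric.isOpen_iff.1 isOpen_interior β hβ
  set t : ℝ := r / (2 * ‖α‖) with ht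
  have hnα : 0 < ‖α‖ := norm_pos_iff.mpr hα0
  have htpos : 0 < t := div_pos hr (by positivity)
  have hmem : β - t • α ∈ E := by
    apply interior_subset
    apply hball
    rw [Metric.mem_ball, dist_eq_norm]
    have : β - t • α - β = -(t • α) := by abel
    rw [this, norm_neg, norm_smul, Real.norm_eq_abs, abs_of_pos htpos]
    rw [ht, div_mul_eq_mul_div, mul_comm]
    rw [div_lt_iff₀ (by positivity)]
    nlinarith
  have key : mob ((1 + t) • α) ≤ mob (α + β) := by
    have := h_mono ((1 + t) • α) (β - t • α) hmem
    have heq : (1 + t) • α + (β - t • α) = α + β := by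
      rw [add_smul, one_smul]; abel
    rwa [heq] at this
  have hhom := h_hom (1 + t) (by linarith) α
  have h1 : (1:ℝ) < (1 + t) ^ p :=
    (Real.one_lt_rpow_iff_of_pos (by linarith)).mpr (Or.inl ⟨by linarith, hp⟩)
  calc mob α < (1 + t) ^ p * mob α := by nlinarith
    _ = mob ((1 + t) • α) := hhom.symm
    _ ≤ mob (α + β) := key
end

section
/- Let V be a finite-dimensional real normed vector space and E ⊆ V a closed convex cone with nonempty interior. Suppose mob : V → ℝ is nonnegative, monotone (mob(α + e) ≥ mob(α) for all α ∈ V and e ∈ E), homogeneous of degree p for some real p > 0 (mob(c • α) = c^p · mob(α) for all reals c > 0 and all α ∈ V), and strictly positive on the interior of E. If P, N ∈ E satisfy mob(P) = mob(P + N), then N does not lie in the interior of E; that is, every negative part of a Zariski decomposition lies on the topological boundary of E. -/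
/-- **Lemma 5.3 (2)**, abstract form.  Let `V` be a finite-dimensional real normed
vector space and `E ⊆ V` a closed convex cone with nonempty interior.  Suppose
`mob : V → ℝ` is nonnegative, monotone, homogeneous of degree `p > 0`, and strictly
positive on the interior of `E`.  If `P, N ∈ E` satisfy `mob P = mob (P + N)`, then
`N` does not lie in the interior of `E`; i.e. every negative part of a Zariski
decomposition lies on the boundary of `E`. -/
theorem negative_part_on_boundary
    {V : Type*} [NormedAddCommGroup V] [NormedSpace ℝ V] [FiniteDimensional ℝ V]
    (E : Set V) (hE_closed : IsClosed E) (hE_convex : Convex ℝ E)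
    (hE_cone : ∀ c : ℝ, 0 ≤ c → ∀ x ∈ E, c • x ∈ E)
    (hE_int : (interior E).Nonempty)
    (mob : V → ℝ)
    (h_nonneg : ∀ x : V, 0 ≤ mob x)
    (h_mono : ∀ α : V, ∀ e ∈ E, mob α ≤ mob (α + e))
    (p : ℝ) (hp : 0 < p)
    (h_hom : ∀ c : ℝ, 0 < c → ∀ α : V, mob (c • α) = c ^ p * mob α)
    (h_pos : ∀ x ∈ interior E, 0 < mob x)
    (P N : V) (hP : P ∈ E) (hN : N ∈ E) (hPN : mob P = mob (P + N)) :
    N ∉ interior E := by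
  intro hNint
  -- find ε > 0 with N - ε • P ∈ E
  have hcont : Continuous (fun ε : ℝ => N - ε • P) := by continuity
  have hopen : IsOpen ((fun ε : ℝ => N - ε • P) ⁻¹' interior E) :=
    isOpen_interior.preimage hcont
  have h0 : (0 : ℝ) ∈ (fun ε : ℝ => N - ε • P) ⁻¹' interior E := by
    simp [hNint]
  obtain ⟨δ, hδpos, hδ⟩ := Metric.isOpen_iff.mp hopen 0 h0
  set ε : ℝ := δ / 2 with hε
  have hεpos : (0 : ℝ) < ε := by positivity
  have hεball : ε ∈ Metric.ball (0 : ℝ) δ := by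
    rw [Metric.mem_ball, Real.dist_eq, sub_zero, abs_of_pos hεpos]
    linarith
  have hmem : N - ε • P ∈ E := interior_subset (hδ hεball)
  -- P + N = (1+ε) • P + (N - ε • P)
  have hdecomp : P + N = (1 + ε) • P + (N - ε • P) := by
    rw [add_smul, one_smul]; abel
  have h1 : mob ((1 + ε) • P) ≤ mob (P + N) := by
    rw [hdecomp]; exact h_mono _ _ hmem
  have h2 : mob ((1 + ε) • P) = (1 + ε) ^ p * mob P :=
    h_hom (1 + ε) (by linarith) P
  have hc : 1 < (1 + ε) ^ p :=
    Real.one_lt_rpow_iff_of_pos (by linarith) |>.mpr (Or.inl ⟨by linarith, hp⟩)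
  have hmobP : mob P = 0 := by
    have := h_nonneg P
    nlinarith [h1, h2, hPN]
  have h3 : mob N ≤ mob (N + P) := h_mono N P hP
  have h4 : 0 < mob N := h_pos N hNint
  rw [add_comm] at h3
  rw [← hPN, hmobP] at h3
  linarith
end

section
/- Let V be a finite-dimensional real normed vector space, E ⊆ V a closed convex cone, and M ⊆ E a closed convex cone. Fix a real q with 0 < q ≤ 1 and suppose mob : V → ℝ is nonnegative, monotone (mob(α + e) ≥ mob(α) for all α ∈ V and e ∈ E), homogeneous of degree 1/q (mob(c • α) = c^{1/q} · mob(α) for all reals c > 0 and all α ∈ V), and log-concave of exponent q, i.e. mob(x + y)^q ≥ mob(x)^q + mob(y)^q for all x, y ∈ E. Then for every α ∈ V the set 𝒫_α := { P ∈ M : α − P ∈ E and mob(P) = mob(α) } of positive parts of α is convex, and so is the set 𝒩_α := { α − P : P ∈ 𝒫_α } of negative parts. -/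
private lemma convex_aux {V : Type*} [AddCommGroup V] [Module ℝ V]
    (α P₁ P₂ : V) {a b : ℝ} (hab : a + b = 1) :
    α - (a • P₁ + b • P₂) = a • (α - P₁) + b • (α - P₂) := by
  have h : α = a • α + b • α := by rw [← add_smul, hab, one_smul]
  rw [smul_sub, smul_sub]
  conv_lhs => rw [h]
  abel

/-- **Lemma 5.3 (3)**, abstract form.  Let `V` be a finite-dimensional real normed
vector space, `E ⊆ V` a closed convex cone and `M ⊆ E` a closed convex cone.  Fix
`0 < q ≤ 1` and suppose `mob : V → ℝ` is nonnegative, monotone, homogeneous of degree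
`1/q`, and log-concave of exponent `q` on `E`.  Then for every `α ∈ V` the set `𝒫_α`
of positive parts of Zariski decompositions of `α` is convex, and so is the set
`𝒩_α` of negative parts. -/
theorem positive_and_negative_parts_convex
    {V : Type*} [NormedAddCommGroup V] [NormedSpace ℝ V] [FiniteDimensional ℝ V]
    (E : Set V) (hE_closed : IsClosed E) (hE_convex : Convex ℝ E)
    (hE_cone : ∀ c : ℝ, 0 ≤ c → ∀ x ∈ E, c • x ∈ E)
    (M : Set V) (hM_sub : M ⊆ E) (hM_closed : IsClosed M) (hM_convex : Convex ℝ M)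
    (hM_cone : ∀ c : ℝ, 0 ≤ c → ∀ x ∈ M, c • x ∈ M)
    (q : ℝ) (hq0 : 0 < q) (hq1 : q ≤ 1)
    (mob : V → ℝ)
    (h_nonneg : ∀ x : V, 0 ≤ mob x)
    (h_mono : ∀ α : V, ∀ e ∈ E, mob α ≤ mob (α + e))
    (h_hom : ∀ c : ℝ, 0 < c → ∀ α : V, mob (c • α) = c ^ (1 / q) * mob α)
    (h_logconc : ∀ x ∈ E, ∀ y ∈ E, mob x ^ q + mob y ^ q ≤ mob (x + y) ^ q)
    (α : V) :
    Convex ℝ {P : V | P ∈ M ∧ α - P ∈ E ∧ mob P = mob α} ∧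
    Convex ℝ ((fun P : V => α - P) '' {P : V | P ∈ M ∧ α - P ∈ E ∧ mob P = mob α}) := by
  have hconv : Convex ℝ {P : V | P ∈ M ∧ α - P ∈ E ∧ mob P = mob α} := by
    rintro P₁ ⟨hP₁M, hP₁E, hP₁mob⟩ P₂ ⟨hP₂M, hP₂E, hP₂mob⟩ a b ha hb hab
    refine ⟨hM_convex hP₁M hP₂M ha hb hab, ?_, ?_⟩
    · rw [convex_aux α P₁ P₂ hab]
      exact hE_convex hP₁E hP₂E ha hb hab
    · -- mob (a•P₁+b•P₂) = mob α
      set P := a • P₁ + b • P₂ with hP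
      have hPE : α - P ∈ E := by
        rw [hP, convex_aux α P₁ P₂ hab]
        exact hE_convex hP₁E hP₂E ha hb hab
      have hle : mob P ≤ mob α := by
        have := h_mono P (α - P) hPE
        simpa using this
      have hge : mob α ≤ mob P := by
        rcases eq_or_lt_of_le ha with ha0 | ha0
        · have hb1 : b = 1 := by linarith
          simp [hP, ← ha0, hb1, hP₂mob]
        rcases eq_or_lt_of_le hb with hb0 | hb0
        · have ha1 : a = 1 := by linarith
          simp [hP, ← hb0, ha1, hP₁mob]
        -- both positive
        have hkey : mob α ^ q ≤ mob P ^ q := by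
          have h1 := h_logconc (a • P₁) (hE_cone a ha _ (hM_sub hP₁M))
            (b • P₂) (hE_cone b hb _ (hM_sub hP₂M))
          have e1 : mob (a • P₁) ^ q = a * mob α ^ q := by
            rw [h_hom a ha0, hP₁mob,
              Real.mul_rpow (Real.rpow_nonneg ha _) (h_nonneg α),
              ← Real.rpow_mul ha, one_div, inv_mul_cancel₀ hq0.ne', Real.rpow_one]
          have e2 : mob (b • P₂) ^ q = b * mob α ^ q := by
            rw [h_hom b hb0, hP₂mob,
              Real.mul_rpow (Real.rpow_nonneg hb _) (h_nonneg α),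
              ← Real.rpow_mul hb, one_div, inv_mul_cancel₀ hq0.ne', Real.rpow_one]
          calc mob α ^ q = a * mob α ^ q + b * mob α ^ q := by
                rw [← add_mul, hab, one_mul]
            _ ≤ mob P ^ q := by rw [← e1, ← e2]; exact h1
        exact (Real.rpow_le_rpow_iff (h_nonneg α) (h_nonneg P) hq0).mp hkey
      exact le_antisymm hle hge
  refine ⟨hconv, ?_⟩
  rintro x ⟨P₁, hP₁, rfl⟩ y ⟨P₂, hP₂, rfl⟩ a b ha hb hab
  refine ⟨a • P₁ + b • P₂, hconv hP₁ hP₂ ha hb hab, ?_⟩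
  exact (convex_aux α P₁ P₂ hab).symm ▸ rfl
end

section
/- Let V be a finite-dimensional real normed vector space, E ⊆ V a closed convex cone, and M ⊆ E a closed convex cone. Suppose mob : V → ℝ is nonnegative and monotone (mob(α + e) ≥ mob(α) for all α ∈ V and e ∈ E). Let P ∈ M and N ∈ E satisfy mob(P) = mob(P + N), i.e. (P+N) = P + N is a Zariski decomposition of α := P + N. Then: (1) for every real t with 0 ≤ t < 1, mob(P + (1−t)N) = mob(P), so α − tN = P + (1−t)N is a Zariski decomposition of α − tN; and (2) if moreover mob is homogeneous of degree 1/q (mob(c • α) = c^{1/q} · mob(α) for all reals c > 0 and all α ∈ V) and log-concave of exponent q for some 0 < q ≤ 1, i.e. mob(x + y)^q ≥ mob(x)^q + mob(y)^q for all x, y ∈ E, then for every real t > 0, mob(P + (1+t)N) = mob(P), so α + tN = P + (1+t)N is a Zariski decomposition of α + tN. -/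
/-- **Lemma 5.11**, abstract form.  Let `V` be a finite-dimensional real normed vector
space, `E ⊆ V` a closed convex cone, `M ⊆ E` a closed convex cone, and `mob : V → ℝ`
nonnegative and monotone.  Let `P ∈ M`, `N ∈ E` satisfy `mob P = mob (P + N)`, so that
`α = P + N` is a Zariski decomposition of `α := P + N`.  Then:
(1) for every `0 ≤ t < 1`, `mob (P + (1 - t) • N) = mob P`, so that
`α - t • N = P + (1 - t) • N` is a Zariski decomposition of `α - t • N`;
(2) if moreover `mob` is homogeneous of degree `1/q` and log-concave of exponent `q`
for some `0 < q ≤ 1`, then for every `t > 0`, `mob (P + (1 + t) • N) = mob P`, so that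
`α + t • N = P + (1 + t) • N` is a Zariski decomposition of `α + t • N`. -/
theorem zariski_decomposition_subadditivity
    {V : Type*} [NormedAddCommGroup V] [NormedSpace ℝ V] [FiniteDimensional ℝ V]
    (E : Set V) (hE_closed : IsClosed E) (hE_convex : Convex ℝ E)
    (hE_cone : ∀ c : ℝ, 0 ≤ c → ∀ x ∈ E, c • x ∈ E)
    (M : Set V) (hM_sub : M ⊆ E) (hM_closed : IsClosed M) (hM_convex : Convex ℝ M)
    (hM_cone : ∀ c : ℝ, 0 ≤ c → ∀ x ∈ M, c • x ∈ M)
    (mob : V → ℝ)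
    (h_nonneg : ∀ x : V, 0 ≤ mob x)
    (h_mono : ∀ α : V, ∀ e ∈ E, mob α ≤ mob (α + e))
    (P N : V) (hP : P ∈ M) (hN : N ∈ E) (hPN : mob P = mob (P + N)) :
    (∀ t : ℝ, 0 ≤ t → t < 1 → mob (P + (1 - t) • N) = mob P) ∧
    (∀ q : ℝ, 0 < q → q ≤ 1 →
      (∀ c : ℝ, 0 < c → ∀ α : V, mob (c • α) = c ^ (1 / q) * mob α) →
      (∀ x ∈ E, ∀ y ∈ E, mob x ^ q + mob y ^ q ≤ mob (x + y) ^ q) →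
      ∀ t : ℝ, 0 < t → mob (P + (1 + t) • N) = mob P) := by
  -- E is closed under addition
  have hE_add : ∀ x ∈ E, ∀ y ∈ E, x + y ∈ E := by
    intro x hx y hy
    have h2 : (2 : ℝ) • ((1/2 : ℝ) • x + (1/2 : ℝ) • y) ∈ E := by
      apply hE_cone 2 (by norm_num)
      exact hE_convex hx hy (by norm_num) (by norm_num) (by norm_num)
    have : (2 : ℝ) • ((1/2 : ℝ) • x + (1/2 : ℝ) • y) = x + y := by
      rw [smul_add, smul_smul, smul_smul]; norm_num
    rwa [this] at h2
  constructor
  · intro t ht0 ht1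
    have h1 : mob P ≤ mob (P + (1 - t) • N) :=
      h_mono P _ (hE_cone (1 - t) (by linarith) N hN)
    have h2 : mob (P + (1 - t) • N) ≤ mob (P + N) := by
      have := h_mono (P + (1 - t) • N) _ (hE_cone t ht0 N hN)
      have heq : P + (1 - t) • N + t • N = P + N := by
        rw [add_assoc, ← add_smul]
        norm_num
      rwa [heq] at this
    linarith [hPN ▸ h2]
  · intro q hq0 hq1 hhom hlog t ht
    have hPE : P ∈ E := hM_sub hP
    have h1t : (0 : ℝ) < 1 + t := by linarith
    have hx : P + (1 + t) • N ∈ E := hE_add P hPE _ (hE_cone (1 + t) h1t.le N hN)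
    have hy : t • P ∈ E := hE_cone t ht.le P hPE
    have hsum : (P + (1 + t) • N) + t • P = (1 + t) • (P + N) := by
      rw [smul_add]
      module
    have key : mob (P + (1 + t) • N) ^ q + mob (t • P) ^ q
        ≤ mob ((1 + t) • (P + N)) ^ q := by
      rw [← hsum]; exact hlog _ hx _ hy
    have hmq := h_nonneg (P + N)
    have hq_ne : q ≠ 0 := ne_of_gt hq0
    have hpow : ∀ c : ℝ, 0 < c → ∀ α : V, mob (c • α) ^ q = c * mob α ^ q := by
      intro c hc α
      rw [hhom c hc α, Real.mul_rpow (Real.rpow_nonneg hc.le _) (h_nonneg α),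
        ← Real.rpow_mul hc.le, one_div_mul_cancel hq_ne, Real.rpow_one]
    have hL : mob ((1 + t) • (P + N)) ^ q = (1 + t) * mob (P + N) ^ q :=
      hpow (1 + t) h1t (P + N)
    have hR : mob (t • P) ^ q = t * mob P ^ q := hpow t ht P
    have hle : mob (P + (1 + t) • N) ^ q ≤ mob P ^ q := by
      rw [hL, ← hPN, hR] at key
      nlinarith [h_nonneg P, Real.rpow_nonneg (h_nonneg P) q]
    have hge : mob P ≤ mob (P + (1 + t) • N) :=
      h_mono P _ (hE_cone (1 + t) h1t.le N hN)
    refine le_antisymm ?_ hge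
    by_contra hlt
    push_neg at hlt
    have := Real.rpow_lt_rpow (h_nonneg P) hlt hq0
    linarith
end

section
/- Let V be a finite-dimensional real normed vector space, E ⊆ V a closed convex cone, and M ⊆ E a closed convex cone. Let L : V → ℝ be a linear functional with L ≥ 0 on E and L > 0 on M ∖ {0}, and let β ∈ E satisfy L(β) = 0. Fix α ∈ V. Then: (a) for every real t ≥ 0, every P ∈ M with (α + tβ) − P ∈ E satisfies L(P) ≤ L(α); and (b) the set { ξ ∈ M : L(ξ) ≤ L(α) } is compact. In particular, the positive parts of all the classes γ_t = α + tβ (t > 0) are contained in a single compact set. -/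
/-- **Lemma 5.12 (1)**, abstract form.  Let `V` be a finite-dimensional real normed
vector space, `E ⊆ V` a closed convex cone and `M ⊆ E` a closed convex cone.  Let
`L : V → ℝ` be a linear functional with `L ≥ 0` on `E` and `L > 0` on `M \ {0}`, and
let `β ∈ E` satisfy `L β = 0`.  Fix `α ∈ V`.  Then:
(a) for every `t ≥ 0`, every `P ∈ M` with `(α + t • β) - P ∈ E` satisfies `L P ≤ L α`;
(b) the set `{ ξ ∈ M : L ξ ≤ L α }` is compact.
In particular, all positive parts of the classes `γ_t = α + t • β` (for `t > 0`) lie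
in a single compact set. -/
theorem positive_parts_bounded_along_extremal_ray
    {V : Type*} [NormedAddCommGroup V] [NormedSpace ℝ V] [FiniteDimensional ℝ V]
    (E : Set V) (hE_closed : IsClosed E) (hE_convex : Convex ℝ E)
    (hE_cone : ∀ c : ℝ, 0 ≤ c → ∀ x ∈ E, c • x ∈ E)
    (M : Set V) (hM_sub : M ⊆ E) (hM_closed : IsClosed M) (hM_convex : Convex ℝ M)
    (hM_cone : ∀ c : ℝ, 0 ≤ c → ∀ x ∈ M, c • x ∈ M)
    (L : V →ₗ[ℝ] ℝ)
    (hL_nonneg : ∀ x ∈ E, 0 ≤ L x)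
    (hL_pos : ∀ x ∈ M, x ≠ 0 → 0 < L x)
    (β : V) (hβ : β ∈ E) (hLβ : L β = 0)
    (α : V) :
    (∀ t : ℝ, 0 ≤ t → ∀ P ∈ M, (α + t • β) - P ∈ E → L P ≤ L α) ∧
    IsCompact {ξ : V | ξ ∈ M ∧ L ξ ≤ L α} := by
  have hLc : Continuous L := L.continuous_of_finiteDimensional
  constructor
  · intro t ht P hP hEP
    have h1 := hL_nonneg _ hEP
    have : L (α + t • β - P) = L α + t * L β - L P := by
      simp [map_add, map_sub, map_smul]
    rw [this, hLβ] at h1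
    linarith
  · have hclosed : IsClosed {ξ : V | ξ ∈ M ∧ L ξ ≤ L α} := by
      have : {ξ : V | ξ ∈ M ∧ L ξ ≤ L α} = M ∩ L ⁻¹' Set.Iic (L α) := rfl
      rw [this]
      exact hM_closed.inter (isClosed_Iic.preimage hLc)
    have hbdd : Bornology.IsBounded {ξ : V | ξ ∈ M ∧ L ξ ≤ L α} := by
      by_cases hS : (M ∩ Metric.sphere (0:V) 1).Nonempty
      · have hScomp : IsCompact (M ∩ Metric.sphere (0:V) 1) :=
          (isCompact_sphere 0 1).inter_left hM_closed
        obtain ⟨x₀, hx₀, hmin⟩ := hScomp.exists_isMinOn hS hLc.continuousOn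
        have hx₀ne : x₀ ≠ 0 := by
          intro h
          have := hx₀.2
          rw [h] at this
          simp at this
        have hc : 0 < L x₀ := hL_pos _ hx₀.1 hx₀ne
        apply Bornology.IsBounded.subset (Metric.isBounded_closedBall
          (x := (0:V)) (r := L α / L x₀))
        rintro ξ ⟨hξM, hξL⟩
        rcases eq_or_ne ξ 0 with rfl | hne
        · simp only [Metric.mem_closedBall, dist_zero_right, norm_zero]
          have hLα : 0 ≤ L α := by simpa using hξL
          positivity
        · have hnorm : 0 < ‖ξ‖ := norm_pos_iff.mpr hne
          have hu : ‖ξ‖⁻¹ • ξ ∈ M ∩ Metric.sphere (0:V) 1 := by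
            refine ⟨hM_cone _ (by positivity) _ hξM, ?_⟩
            simp [norm_smul, abs_of_pos (inv_pos.mpr hnorm), inv_mul_cancel₀ hnorm.ne']
          have hmin' : L x₀ ≤ L (‖ξ‖⁻¹ • ξ) := hmin hu
          rw [map_smul, smul_eq_mul] at hmin'
          have hle : L x₀ * ‖ξ‖ ≤ L ξ := by
            have h2 := mul_le_mul_of_nonneg_left hmin' hnorm.le
            have h3 : ‖ξ‖ * (‖ξ‖⁻¹ * L ξ) = L ξ := by
              field_simp
            nlinarith
          simp only [Metric.mem_closedBall, dist_zero_right]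
          rw [le_div_iff₀ hc, mul_comm]
          exact hle.trans hξL
      · have : {ξ : V | ξ ∈ M ∧ L ξ ≤ L α} ⊆ {0} := by
          rintro ξ ⟨hξM, _⟩
          by_contra hne
          have hnorm : 0 < ‖ξ‖ := norm_pos_iff.mpr hne
          exact hS ⟨‖ξ‖⁻¹ • ξ, hM_cone _ (by positivity) _ hξM, by
            simp [norm_smul, abs_of_pos (inv_pos.mpr hnorm), inv_mul_cancel₀ hnorm.ne']⟩
        exact (Bornology.isBounded_singleton (x := (0:V))).subset this
    exact Metric.isCompact_of_isClosed_isBounded hclosed hbdd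
end

section
/- In V = ℝ⁵ define C₁ = (1,0,0,1,0), C₂ = (0,1,0,1,0), C₃ = (0,0,1,1,0), C₄ = (−1,−1,−1,−2,1), C₅ = (0,0,0,−1,0), and M₁ = (1,0,0,0,2), M₂ = (0,1,0,0,2), M₃ = (0,0,1,0,2), M₄ = (0,0,0,1,1), M₅ = (0,0,0,0,1), M₆ = (1,1,1,0,3). Let 𝒞 be the set of linear combinations of C₁,…,C₅ with nonnegative real coefficients and ℳ the set of linear combinations of M₁,…,M₆ with nonnegative real coefficients, and set α = (1,1,0,1,2). Then M₁ ∈ ℳ, M₂ ∈ ℳ, α − M₁ = C₂ ∈ 𝒞 and α − M₂ = C₁ ∈ 𝒞, but there exists no β ∈ ℳ with α − β ∈ 𝒞, β − M₁ ∈ 𝒞, and β − M₂ ∈ 𝒞. Consequently the set S := { β ∈ ℳ : α − β ∈ 𝒞 } contains M₁ and M₂ but is not directed under the partial order β ⪯ β′ defined by β′ − β ∈ 𝒞. -/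
/-! **Example 5.10** of the paper.  In `N₁(X) ≅ ℝ⁵` for the smooth toric threefold
described there, the pseudo-effective cone of curves is generated by `C₁, …, C₅` and
the movable cone of curves by `M₁, …, M₆`.  For the big non-movable class
`α = (1,1,0,1,2)` the set of movable classes dominated by `α` is not directed. -/

noncomputable section

def vC1 : Fin 5 → ℝ := ![1, 0, 0, 1, 0]
def vC2 : Fin 5 → ℝ := ![0, 1, 0, 1, 0]
def vC3 : Fin 5 → ℝ := ![0, 0, 1, 1, 0]
def vC4 : Fin 5 → ℝ := ![-1, -1, -1, -2, 1]
def vC5 : Fin 5 → ℝ := ![0, 0, 0, -1, 0]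

def vM1 : Fin 5 → ℝ := ![1, 0, 0, 0, 2]
def vM2 : Fin 5 → ℝ := ![0, 1, 0, 0, 2]
def vM3 : Fin 5 → ℝ := ![0, 0, 1, 0, 2]
def vM4 : Fin 5 → ℝ := ![0, 0, 0, 1, 1]
def vM5 : Fin 5 → ℝ := ![0, 0, 0, 0, 1]
def vM6 : Fin 5 → ℝ := ![1, 1, 1, 0, 3]

/-- The cone `𝒞` of nonnegative combinations of `C₁, …, C₅` (the pseudo-effective
cone of curves). -/
def effCone : Set (Fin 5 → ℝ) :=
  {v | ∃ a : Fin 5 → ℝ, (∀ i, 0 ≤ a i) ∧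
    v = a 0 • vC1 + a 1 • vC2 + a 2 • vC3 + a 3 • vC4 + a 4 • vC5}

/-- The cone `ℳ` of nonnegative combinations of `M₁, …, M₆` (the movable cone of
curves). -/
def movCone : Set (Fin 5 → ℝ) :=
  {v | ∃ b : Fin 6 → ℝ, (∀ i, 0 ≤ b i) ∧
    v = b 0 • vM1 + b 1 • vM2 + b 2 • vM3 + b 3 • vM4 + b 4 • vM5 + b 5 • vM6}

def alphaVec : Fin 5 → ℝ := ![1, 1, 0, 1, 2]

/-! The cone `𝒞` is simplicial: `C₁, …, C₅` is a basis of `ℝ⁵`, so `𝒞` is the nonnegative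
orthant in the coordinates `effCoord` with respect to this basis. If `β` dominated both `M₁`
and `M₂` inside `S`, then `γ = α − β` would lie in `𝒞` and below both `α − M₁ = C₂` and
`α − M₂ = C₁`; in coordinates `0 ≤ effCoord γ ≤ e₂ ⊓ e₁ = 0`, so `β = α`. But `α` is not
movable: the functional `x₅ − x₁ − x₂ − x₃ − x₄` is nonnegative on every `Mᵢ` and equals
`−1` at `α`. -/

def effCoord (v : Fin 5 → ℝ) : Fin 5 → ℝ :=
  ![v 0 + v 4, v 1 + v 4, v 2 + v 4, v 4, v 0 + v 1 + v 2 - v 3 + v 4]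

theorem effCoord_sub (v w : Fin 5 → ℝ) : effCoord (v - w) = effCoord v - effCoord w := by
  ext i; fin_cases i <;> simp [effCoord] <;> ring

theorem effCoord_combination (a : Fin 5 → ℝ) :
    effCoord (a 0 • vC1 + a 1 • vC2 + a 2 • vC3 + a 3 • vC4 + a 4 • vC5) = a := by
  ext i; fin_cases i <;> simp [effCoord, vC1, vC2, vC3, vC4, vC5]; ring

theorem combination_effCoord (v : Fin 5 → ℝ) :
    v = effCoord v 0 • vC1 + effCoord v 1 • vC2 + effCoord v 2 • vC3 + effCoord v 3 • vC4 +
      effCoord v 4 • vC5 := by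
  ext i; fin_cases i <;> simp [effCoord, vC1, vC2, vC3, vC4, vC5]; ring

theorem mem_effCone_iff {v : Fin 5 → ℝ} : v ∈ effCone ↔ 0 ≤ effCoord v := by
  constructor
  · rintro ⟨a, ha, rfl⟩
    rw [effCoord_combination]
    exact ha
  · exact fun h => ⟨effCoord v, h, combination_effCoord v⟩

theorem effCoord_vC1 : effCoord vC1 = Pi.single 0 1 := by
  ext i; fin_cases i <;> simp [effCoord, vC1]

theorem effCoord_vC2 : effCoord vC2 = Pi.single 1 1 := by
  ext i; fin_cases i <;> simp [effCoord, vC2]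

theorem vC1_mem_effCone : vC1 ∈ effCone := by
  rw [mem_effCone_iff, effCoord_vC1]
  exact Pi.single_nonneg.mpr zero_le_one

theorem vC2_mem_effCone : vC2 ∈ effCone := by
  rw [mem_effCone_iff, effCoord_vC2]
  exact Pi.single_nonneg.mpr zero_le_one

theorem eq_zero_of_mem_effCone_of_sub_mem {γ : Fin 5 → ℝ} (hγ : γ ∈ effCone)
    (h₁ : vC1 - γ ∈ effCone) (h₂ : vC2 - γ ∈ effCone) : γ = 0 := by
  rw [mem_effCone_iff] at hγ h₁ h₂
  rw [effCoord_sub, sub_nonneg, effCoord_vC1] at h₁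
  rw [effCoord_sub, sub_nonneg, effCoord_vC2] at h₂
  have hsingle : (Pi.single 0 1 ⊓ Pi.single 1 1 : Fin 5 → ℝ) = 0 := by
    ext i; fin_cases i <;> simp
  have hcoord : effCoord γ = 0 := le_antisymm (hsingle ▸ le_inf h₁ h₂) hγ
  rw [combination_effCoord γ, hcoord]
  simp

theorem nonneg_of_mem_movCone {v : Fin 5 → ℝ} (hv : v ∈ movCone) :
    0 ≤ v 4 - v 0 - v 1 - v 2 - v 3 := by
  obtain ⟨b, hb, rfl⟩ := hv
  simp [vM1, vM2, vM3, vM4, vM5, vM6]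
  linarith [hb 0, hb 1, hb 2, hb 4]

theorem alphaVec_notMem_movCone : alphaVec ∉ movCone := fun h => by
  have := nonneg_of_mem_movCone h
  simp [alphaVec] at this
  norm_num at this

theorem vM1_mem_movCone : vM1 ∈ movCone :=
  ⟨![1, 0, 0, 0, 0, 0], fun i => by fin_cases i <;> simp, by
    ext i; fin_cases i <;> simp [vM1, vM2, vM3, vM4, vM5, vM6]⟩

theorem vM2_mem_movCone : vM2 ∈ movCone :=
  ⟨![0, 1, 0, 0, 0, 0], fun i => by fin_cases i <;> simp, by
    ext i; fin_cases i <;> simp [vM1, vM2, vM3, vM4, vM5, vM6]⟩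

theorem alphaVec_sub_vM1 : alphaVec - vM1 = vC2 := by
  ext i; fin_cases i <;> norm_num [alphaVec, vM1, vC2]

theorem alphaVec_sub_vM2 : alphaVec - vM2 = vC1 := by
  ext i; fin_cases i <;> norm_num [alphaVec, vM2, vC1]

/-- The set `S = { β ∈ ℳ : α − β ∈ 𝒞 }` contains `M₁` and `M₂` (indeed
`α − M₁ = C₂` and `α − M₂ = C₁`), but is not directed under the order `β ⪯ β'`
iff `β' − β ∈ 𝒞`: no `β ∈ S` dominates both `M₁` and `M₂`. -/
theorem movable_classes_below_alpha_not_directed :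
    vM1 ∈ movCone ∧ vM2 ∈ movCone ∧
    alphaVec - vM1 = vC2 ∧ alphaVec - vM2 = vC1 ∧
    vC2 ∈ effCone ∧ vC1 ∈ effCone ∧
    ¬ ∃ β ∈ movCone,
        alphaVec - β ∈ effCone ∧ β - vM1 ∈ effCone ∧ β - vM2 ∈ effCone := by
  refine ⟨vM1_mem_movCone, vM2_mem_movCone, alphaVec_sub_vM1, alphaVec_sub_vM2,
    vC2_mem_effCone, vC1_mem_effCone, ?_⟩
  rintro ⟨β, hβ, hαβ, h₁, h₂⟩
  have hβα : alphaVec - β = 0 := by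
    refine eq_zero_of_mem_effCone_of_sub_mem hαβ ?_ ?_
    · rwa [← alphaVec_sub_vM2, sub_sub_sub_cancel_left]
    · rwa [← alphaVec_sub_vM1, sub_sub_sub_cancel_left]
  exact alphaVec_notMem_movCone (sub_eq_zero.mp hβα ▸ hβ)

end
end

section
/- Let V and W be finite-dimensional real normed vector spaces and π : V → W a surjective linear map. Let E_V ⊆ V and E_W ⊆ W be closed convex cones with π(E_V) ⊇ E_W, and let M ⊆ E_V be a closed convex cone. Suppose there is a linear functional L : V → ℝ that vanishes on ker(π), is nonnegative on E_V, and is strictly positive on M ∖ {0}. Then for every α ∈ W the set S := { ξ ∈ M : α − π(ξ) ∈ E_W } is compact. -/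
/-- **Corollary 6.3**, abstract form.  Let `V` and `W` be finite-dimensional real
normed vector spaces and `π : V → W` a surjective linear map.  Let `E_V ⊆ V` and
`E_W ⊆ W` be closed convex cones with `E_W ⊆ π(E_V)`, and `M ⊆ E_V` a closed convex
cone.  Suppose a linear functional `L : V → ℝ` vanishes on `ker π`, is nonnegative on
`E_V`, and is strictly positive on `M \ {0}`.  Then for every `α ∈ W` the set
`{ ξ ∈ M : α − π ξ ∈ E_W }` is compact. -/
theorem compact_movable_classes_with_dominated_pushforward
    {V W : Type*} [NormedAddCommGroup V] [NormedSpace ℝ V] [FiniteDimensional ℝ V]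
    [NormedAddCommGroup W] [NormedSpace ℝ W] [FiniteDimensional ℝ W]
    (π : V →ₗ[ℝ] W) (hπ_surj : Function.Surjective π)
    (EV : Set V) (hEV_closed : IsClosed EV) (hEV_convex : Convex ℝ EV)
    (hEV_cone : ∀ c : ℝ, 0 ≤ c → ∀ x ∈ EV, c • x ∈ EV)
    (EW : Set W) (hEW_closed : IsClosed EW) (hEW_convex : Convex ℝ EW)
    (hEW_cone : ∀ c : ℝ, 0 ≤ c → ∀ y ∈ EW, c • y ∈ EW)
    (h_image : EW ⊆ π '' EV)
    (M : Set V) (hM_sub : M ⊆ EV) (hM_closed : IsClosed M) (hM_convex : Convex ℝ M)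
    (hM_cone : ∀ c : ℝ, 0 ≤ c → ∀ x ∈ M, c • x ∈ M)
    (L : V →ₗ[ℝ] ℝ)
    (hL_ker : ∀ v : V, π v = 0 → L v = 0)
    (hL_nonneg : ∀ v ∈ EV, 0 ≤ L v)
    (hL_pos : ∀ v ∈ M, v ≠ 0 → 0 < L v)
    (α : W) :
    IsCompact {ξ : V | ξ ∈ M ∧ α - π ξ ∈ EW} := by
  have hπc : Continuous π := π.continuous_of_finiteDimensional
  have hLc : Continuous L := L.continuous_of_finiteDimensional
  -- closedness
  have hclosed : IsClosed {ξ : V | ξ ∈ M ∧ α - π ξ ∈ EW} := by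
    exact hM_closed.inter (hEW_closed.preimage (by continuity : Continuous fun ξ : V => α - π ξ))
  -- fix a preimage of α
  obtain ⟨ξ₀, hξ₀⟩ := hπ_surj α
  set C := L ξ₀ with hC
  -- L is bounded by C on S
  have hbound : ∀ ξ ∈ {ξ : V | ξ ∈ M ∧ α - π ξ ∈ EW}, L ξ ≤ C := by
    rintro ξ ⟨hξM, hξE⟩
    obtain ⟨η, hηEV, hηπ⟩ := h_image hξE
    have hker : π (ξ + η - ξ₀) = 0 := by
      simp [map_sub, map_add, hηπ, hξ₀]
    have := hL_ker _ hker
    have hLη : 0 ≤ L η := hL_nonneg η hηEV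
    have : L ξ + L η = L ξ₀ := by
      have h2 : L (ξ + η - ξ₀) = L ξ + L η - L ξ₀ := by simp [map_sub, map_add]
      linarith [this, h2.symm.trans this]
    linarith
  -- boundedness
  rw [Metric.isCompact_iff_isClosed_bounded]
  refine ⟨hclosed, ?_⟩
  by_cases hMS : (M ∩ Metric.sphere 0 1).Nonempty
  · have hKcompact : IsCompact (M ∩ Metric.sphere 0 1) :=
      (isCompact_sphere (0:V) 1).inter_left hM_closed
    obtain ⟨u, huK, hu_min⟩ := hKcompact.exists_isMinOn hMS hLc.continuousOn
    set m := L u with hm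
    have hu_ne : u ≠ 0 := by
      intro h
      have : ‖u‖ = 1 := by simpa using huK.2
      rw [h] at this; simp at this
    have hmpos : 0 < m := hL_pos u huK.1 hu_ne
    -- every ξ ∈ S has ‖ξ‖ ≤ C / m
    rw [Metric.isBounded_iff_subset_closedBall 0]
    refine ⟨C / m, ?_⟩
    rintro ξ ⟨hξM, hξE⟩
    rcases eq_or_ne ξ 0 with rfl | hne
    · have h0 : (0:ℝ) ≤ C := by simpa using hbound 0 ⟨hξM, by simpa using hξE⟩
      simp [Metric.mem_closedBall]
      positivity
    · have hnorm : (0:ℝ) < ‖ξ‖ := norm_pos_iff.mpr hne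
      have hunit : (‖ξ‖⁻¹ • ξ) ∈ M ∩ Metric.sphere 0 1 := by
        refine ⟨hM_cone _ (by positivity) ξ hξM, ?_⟩
        simp [norm_smul, abs_of_pos (inv_pos.mpr hnorm), inv_mul_cancel₀ hnorm.ne']
      have h1 : m ≤ L (‖ξ‖⁻¹ • ξ) := hu_min hunit
      have h2 : L (‖ξ‖⁻¹ • ξ) = ‖ξ‖⁻¹ * L ξ := by simp
      have h3 : m * ‖ξ‖ ≤ L ξ := by
        rw [h2] at h1
        have h4 := mul_le_mul_of_nonneg_left h1 hnorm.le
        rwa [← mul_assoc, mul_inv_cancel₀ hnorm.ne', one_mul, mul_comm] at h4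
      have hLC := hbound ξ ⟨hξM, hξE⟩
      have : ‖ξ‖ ≤ C / m := by
        rw [le_div_iff₀ hmpos]; linarith [mul_comm m ‖ξ‖]
      simpa [Metric.mem_closedBall] using this
  · -- M ⊆ {0}
    rw [Set.not_nonempty_iff_eq_empty] at hMS
    have : {ξ : V | ξ ∈ M ∧ α - π ξ ∈ EW} ⊆ {0} := by
      rintro ξ ⟨hξM, -⟩
      rcases eq_or_ne ξ 0 with rfl | hne
      · rfl
      · exfalso
        have hnorm : (0:ℝ) < ‖ξ‖ := norm_pos_iff.mpr hne
        have hunit : (‖ξ‖⁻¹ • ξ) ∈ M ∩ Metric.sphere 0 1 := by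
          refine ⟨hM_cone _ (by positivity) ξ hξM, ?_⟩
          simp [norm_smul, abs_of_pos (inv_pos.mpr hnorm), inv_mul_cancel₀ hnorm.ne']
        rw [hMS] at hunit; exact hunit
    exact (Set.finite_singleton 0).subset this |>.isBounded
end
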